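/- arXiv:math/0701204 — 2 statements merged into one kernel-verified Lean document; each statement's English description precedes it below -/
import Mathlib

section
/- Let L be the conic set L = {(x, σ, ξ, ρ) ∈ T*(ℝⁿ × ℝⁿ) : I(x,σ) = 0, ξ = τ d_x I(x,σ), ρ = τ d_σ I(x,σ), τ ≠ 0} for a smooth function I with nonvanishing differential on {I=0}. Suppose det Φ ≠ 0 at a point of {I = 0} (with Φ the bordered matrix of Proposition 1). If a vector (δx, δσ, δξ, δρ) tangent to L at the corresponding point satisfies δσ = 0 and δρ = 0, then δx = 0 and δξ = 0. -/
/-- Lemma inside the proof of Proposition 2: a tangent vector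
`(δx, δσ, δξ, δρ)` to the conic Lagrange manifold
`L = {I = 0, ξ = τ d_xI, ρ = τ d_σI, τ ≠ 0}` with `δσ = 0`, `δρ = 0` must satisfy
`δx = 0` and `δξ = 0`, provided `det Φ ≠ 0` at the base point. Tangent vectors are
described by the linearized equations of `L` in the parametrization by `(x, σ, τ)`. -/
theorem stmt_6 (n : ℕ) (I : (Fin n → ℝ) → (Fin n → ℝ) → ℝ)
    (hI : ContDiff ℝ 2 (fun p : (Fin n → ℝ) × (Fin n → ℝ) => I p.1 p.2))
    (x σ : Fin n → ℝ) (hI0 : I x σ = 0)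
    (Dx Dσ : Fin n → (Fin n → ℝ) → (Fin n → ℝ) → ℝ)
    (hDx : ∀ i x' σ', Dx i x' σ' = fderiv ℝ (fun t => I t σ') x' (Pi.single i 1))
    (hDσ : ∀ j x' σ', Dσ j x' σ' = fderiv ℝ (fun t => I x' t) σ' (Pi.single j 1))
    (Dxσ Dxx : Fin n → Fin n → (Fin n → ℝ) → (Fin n → ℝ) → ℝ)
    (hDxσ : ∀ i j x' σ', Dxσ i j x' σ' = fderiv ℝ (fun t => Dx i x' t) σ' (Pi.single j 1))
    (hDxx : ∀ i j x' σ', Dxx i j x' σ' = fderiv ℝ (fun t => Dx i t σ') x' (Pi.single j 1))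
    (Φ : Matrix (Fin (n + 1)) (Fin (n + 1)) ℝ)
    (hΦ1 : ∀ i j : Fin n, Φ i.castSucc j.castSucc = Dxσ i j x σ)
    (hΦ2 : ∀ i : Fin n, Φ i.castSucc (Fin.last n) = Dx i x σ)
    (hΦ3 : ∀ j : Fin n, Φ (Fin.last n) j.castSucc = Dσ j x σ)
    (hΦ4 : Φ (Fin.last n) (Fin.last n) = I x σ)
    (hdet : Φ.det ≠ 0)
    (τ : ℝ) (hτ : τ ≠ 0) (δx δξ : Fin n → ℝ) (δτ : ℝ)
    -- `dI(δx, δσ) = 0` with `δσ = 0`: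
    (htan : ∑ i, Dx i x σ * δx i = 0)
    -- `δρ = δτ·d_σI + τ·(d_xd_σI(δx) + d_σ²I(δσ)) = 0` with `δσ = 0`:
    (hρ : ∀ j, δτ * Dσ j x σ + τ * ∑ i, Dxσ i j x σ * δx i = 0)
    -- `δξ = δτ·d_xI + τ·(d_x²I(δx) + d_σd_xI(δσ))` with `δσ = 0`:
    (hξ : ∀ i, δξ i = δτ * Dx i x σ + τ * ∑ j, Dxx i j x σ * δx j) :
    δx = 0 ∧ δξ = 0 := by
  set v := (Fin.snoc (fun i => τ * δx i) δτ : Fin (n + 1) → ℝ) with hv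
  have hvm : Matrix.vecMul v Φ = 0 := by
    funext j
    refine Fin.lastCases ?_ ?_ j
    · show ∑ i, v i * Φ i (Fin.last n) = 0
      rw [Fin.sum_univ_castSucc]
      simp only [hv, Fin.snoc_castSucc, Fin.snoc_last, hΦ2, hΦ4, hI0, mul_zero, add_zero]
      calc ∑ i, τ * δx i * Dx i x σ = τ * ∑ i, Dx i x σ * δx i := by
            rw [Finset.mul_sum]; exact Finset.sum_congr rfl fun i _ => by ring
        _ = 0 := by rw [htan, mul_zero]
    · intro j
      show ∑ i, v i * Φ i j.castSucc = 0
      rw [Fin.sum_univ_castSucc]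
      simp only [hv, Fin.snoc_castSucc, Fin.snoc_last, hΦ1, hΦ3]
      calc ∑ i, τ * δx i * Dxσ i j x σ + δτ * Dσ j x σ
          = δτ * Dσ j x σ + τ * ∑ i, Dxσ i j x σ * δx i := by
            rw [Finset.mul_sum, add_comm]; exact congrArg _ (Finset.sum_congr rfl fun i _ => by ring)
        _ = 0 := hρ j
  have hv0 : v = 0 := Matrix.eq_zero_of_vecMul_eq_zero hdet hvm
  have hδx : δx = 0 := by
    funext i
    have := congrFun hv0 i.castSucc
    simp only [hv, Fin.snoc_castSucc, Pi.zero_apply] at this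
    exact (mul_eq_zero.mp this).resolve_left hτ
  have hδτ : δτ = 0 := by
    have := congrFun hv0 (Fin.last n)
    simpa [hv] using this
  refine ⟨hδx, ?_⟩
  funext i
  rw [hξ i, hδτ]
  simp [hδx]
end

section
/- Let X be a Banach space and M : X → Z a bounded linear injective operator into a Banach space Z. Assume that the embedding ι : X → W into a Banach space W is compact, that M extends to a bounded injective operator M_W : W → Z, and that there exist constants C₁, C₂ such that ‖x‖_X ≤ C₁‖Mx‖_Z + C₂‖ιx‖_W for all x ∈ X. Then there exists c > 0 such that c‖x‖_X ≤ ‖Mx‖_Z for all x ∈ X. -/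
/-- Compactness–uniqueness upgrade (Corollary 3): if `ι : X → W` is a compact embedding,
`M = M_W ∘ ι` with `M_W` bounded injective, and the a priori estimate
`‖x‖ ≤ C₁‖Mx‖ + C₂‖ιx‖` holds, then there is `c > 0` with `c‖x‖ ≤ ‖Mx‖` for all `x`. -/
theorem stmt_12 {X W Z : Type*}
    [NormedAddCommGroup X] [NormedSpace ℝ X] [CompleteSpace X]
    [NormedAddCommGroup W] [NormedSpace ℝ W] [CompleteSpace W]
    [NormedAddCommGroup Z] [NormedSpace ℝ Z] [CompleteSpace Z]
    (ι : X →L[ℝ] W) (hι : IsCompactOperator ι)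
    (MW : W →L[ℝ] Z) (hMW : Function.Injective MW)
    (M : X →L[ℝ] Z) (hM : M = MW.comp ι)
    (C₁ C₂ : ℝ) (hest : ∀ x : X, ‖x‖ ≤ C₁ * ‖M x‖ + C₂ * ‖ι x‖) :
    ∃ c : ℝ, 0 < c ∧ ∀ x : X, c * ‖x‖ ≤ ‖M x‖ := by
  by_contra h
  push_neg at h
  -- build a normalized sequence with `‖M uₙ‖ < 1/(n+1)`
  have hseq : ∀ n : ℕ, ∃ u : X, ‖u‖ = 1 ∧ ‖M u‖ < 1 / (n + 1) := by
    intro n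
    obtain ⟨x, hx⟩ := h (1 / (n + 1)) (by positivity)
    have hx0 : x ≠ 0 := by
      rintro rfl; simp at hx
    refine ⟨‖x‖⁻¹ • x, ?_, ?_⟩
    · rw [norm_smul, norm_inv, norm_norm,
        inv_mul_cancel₀ (norm_ne_zero_iff.mpr hx0)]
    · rw [map_smul, norm_smul, norm_inv, norm_norm]
      have hxpos : (0:ℝ) < ‖x‖ := norm_pos_iff.mpr hx0
      rw [inv_mul_lt_iff₀ hxpos]
      calc ‖M x‖ < 1 / (n + 1) * ‖x‖ := hx
        _ = ‖x‖ * (1 / (n + 1)) := mul_comm _ _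
  choose u hu1 hu2 using hseq
  -- `M uₙ → 0`
  have hMu : Filter.Tendsto (fun n => M (u n)) Filter.atTop (nhds 0) := by
    rw [tendsto_zero_iff_norm_tendsto_zero]
    refine squeeze_zero (fun n => norm_nonneg _) (fun n => (hu2 n).le) ?_
    exact tendsto_one_div_add_atTop_nhds_zero_nat
  -- compactness: subsequence of `ι uₙ` converges
  have hK : IsCompact (closure (ι '' Metric.closedBall 0 1)) :=
    hι.isCompact_closure_image_closedBall (𝕜₁ := ℝ) 1
  have hmem : ∀ n, ι (u n) ∈ closure (ι '' Metric.closedBall 0 1) := fun n =>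
    subset_closure ⟨u n, by simp [hu1 n], rfl⟩
  obtain ⟨w, -, φ, hφ, hconv⟩ := hK.tendsto_subseq hmem
  -- `MW w = 0`, hence `w = 0`
  have hMWw : MW w = 0 := by
    have h1 : Filter.Tendsto (fun n => MW (ι (u (φ n)))) Filter.atTop (nhds (MW w)) :=
      (MW.continuous.tendsto w).comp hconv
    have h2 : Filter.Tendsto (fun n => M (u (φ n))) Filter.atTop (nhds 0) :=
      hMu.comp hφ.tendsto_atTop
    have heq : (fun n => MW (ι (u (φ n)))) = fun n => M (u (φ n)) := by
      funext n; rw [hM]; rfl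
    rw [heq] at h1
    exact tendsto_nhds_unique h1 h2
  have hw0 : w = 0 := hMW (by simpa using hMWw)
  -- pass to the limit in the estimate: 1 ≤ 0
  have hlim : Filter.Tendsto
      (fun n => C₁ * ‖M (u (φ n))‖ + C₂ * ‖ι (u (φ n))‖) Filter.atTop (nhds 0) := by
    have h2 : Filter.Tendsto (fun n => M (u (φ n))) Filter.atTop (nhds 0) :=
      hMu.comp hφ.tendsto_atTop
    have := ((h2.norm.const_mul C₁).add ((hw0 ▸ hconv).norm.const_mul C₂))
    simpa using this
  have hle : (1:ℝ) ≤ 0 := by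
    refine le_of_tendsto_of_tendsto tendsto_const_nhds hlim ?_
    filter_upwards with n
    have := hest (u (φ n))
    rwa [hu1 (φ n)] at this
  linarith
end
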